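/- arXiv:1008.2238 — 5 statements merged into one kernel-verified Lean document; each statement's English description precedes it below -/
import Mathlib

section
/- Let k be a field of characteristic 0 and t transcendental over k. Let m = (at² + bt + c)/(dt² + et + f) with a,b,c,d,e,f ∈ k, a and d not both zero, ae = bd, af ≠ cd, b² ≠ 4ac, and e² ≠ 4df. Then m has no square root in k(t), i.e., there is no g ∈ k(t) with g² = m. -/
open Polynomial

lemma quad_sep {k : Type*} [Field k] [CharZero k] (a b c : k) (h : b ^ 2 ≠ 4 * a * c) :
    (C a * X ^ 2 + C b * X + C c : k[X]).Separable := by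
  have hd : (4 * a * c - b ^ 2 : k) ≠ 0 := sub_ne_zero.mpr fun hh => h hh.symm
  refine ⟨C (4 * a * (4 * a * c - b ^ 2)⁻¹),
    -(C ((4 * a * c - b ^ 2)⁻¹)) * (C (2 * a) * X + C b), ?_⟩
  have hder : (C a * X ^ 2 + C b * X + C c : k[X]).derivative = C (2 * a) * X + C b := by
    simp only [derivative_add, derivative_mul, derivative_C, derivative_X, derivative_X_pow]
    ring_nf
    simp [C_mul]
    ring
  rw [hder]
  have hone : (C ((4 * a * c - b ^ 2) * (4 * a * c - b ^ 2)⁻¹) : k[X]) = 1 := by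
    rw [mul_inv_cancel₀ hd, C_1]
  simp only [map_mul, map_sub, map_add, map_pow, map_ofNat] at hone ⊢
  linear_combination hone

/-- Let `k` be a field of characteristic 0 and `t` transcendental over `k`.
With `m = (a t² + b t + c)/(d t² + e t + f)` as before (`a,d` not both zero, `a e = b d`,
`a f ≠ c d`, `b² ≠ 4 a c`, `e² ≠ 4 d f`), `m` has no square root in `k(t)`. -/
theorem stmt3 (k : Type*) [Field k] [CharZero k] (a b c d e f : k)
    (had : ¬(a = 0 ∧ d = 0)) (h1 : a * e = b * d) (h2 : a * f ≠ c * d)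
    (h3 : b ^ 2 ≠ 4 * a * c) (h4 : e ^ 2 ≠ 4 * d * f)
    (m : RatFunc k)
    (hm : m = algebraMap (Polynomial k) (RatFunc k) (C a * X ^ 2 + C b * X + C c) /
      algebraMap (Polynomial k) (RatFunc k) (C d * X ^ 2 + C e * X + C f)) :
    ¬ ∃ g : RatFunc k, g ^ 2 = m := by
  rintro ⟨g, hg⟩
  set P : k[X] := C a * X ^ 2 + C b * X + C c with hPdef
  set Q : k[X] := C d * X ^ 2 + C e * X + C f with hQdef
  have hafcd : a * f - c * d ≠ 0 := sub_ne_zero.mpr h2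
  -- coprimality of P and Q
  have hcop : IsCoprime P Q := by
    refine ⟨-(C (d * (a * f - c * d)⁻¹)), C (a * (a * f - c * d)⁻¹), ?_⟩
    have hone : (C ((a * f - c * d) * (a * f - c * d)⁻¹) : k[X]) = 1 := by
      rw [mul_inv_cancel₀ hafcd, C_1]
    have h1' : (C (a * e) : k[X]) = C (b * d) := by rw [h1]
    simp only [map_mul, map_sub, map_add, map_pow, map_ofNat] at hone h1' ⊢
    linear_combination hone + (C ((a * f - c * d)⁻¹) : k[X]) * X * h1'
  have sepPQ : (P * Q).Separable :=
    (quad_sep a b c h3).mul (quad_sep d e f h4) hcop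
  -- Q ≠ 0
  have hQ0 : Q ≠ 0 := by
    intro h
    apply h4
    have hd : d = 0 := by
      have := congrArg (fun p => coeff p 2) h
      simpa [hQdef, coeff_one] using this
    have he : e = 0 := by
      have := congrArg (fun p => coeff p 1) h
      simpa [hQdef, coeff_one] using this
    simp [hd, he]
  have hQ0' : algebraMap k[X] (RatFunc k) Q ≠ 0 := by
    simpa using (RatFunc.algebraMap_ne_zero hQ0)
  -- key equation
  have key : (g * algebraMap k[X] (RatFunc k) Q) ^ 2 = algebraMap k[X] (RatFunc k) (P * Q) := by
    rw [mul_pow, hg, hm, map_mul]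
    field_simp
  -- integrality
  have hint : IsIntegral k[X] (g * algebraMap k[X] (RatFunc k) Q) := by
    refine ⟨X ^ 2 - C (P * Q), monic_X_pow_sub_C _ two_ne_zero, ?_⟩
    simp [key]
  obtain ⟨r, hr⟩ := IsIntegrallyClosed.isIntegral_iff.mp hint
  have hr2 : r ^ 2 = P * Q := by
    apply IsFractionRing.injective k[X] (RatFunc k)
    rw [map_pow, hr, key]
  have hu : IsUnit r := sepPQ.squarefree r (by rw [← sq, hr2])
  have hPQu : IsUnit (P * Q) := by rw [← hr2]; exact hu.pow 2
  have hPu : IsUnit P := isUnit_of_mul_isUnit_left hPQu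
  have hdeg : P.natDegree = 0 := natDegree_eq_zero_of_isUnit hPu
  have ha : a = 0 := by
    have := coeff_eq_zero_of_natDegree_lt (n := 2) (by omega : P.natDegree < 2)
    simpa [hPdef, coeff_one] using this
  have hb : b = 0 := by
    have := coeff_eq_zero_of_natDegree_lt (n := 1) (by omega : P.natDegree < 1)
    simpa [hPdef, coeff_one] using this
  exact h3 (by simp [ha, hb])
end

section
/- Let k be a field of characteristic 0 and t transcendental over k, with m as in the previous context (satisfying ae=bd, af≠cd, b²≠4ac, e²≠4df, a,d not both zero). If there exist coprime polynomials p, q ∈ k[t] with q ≠ 0 and p²(dt²+et+f) = q²(at²+bt+c), then deg p ≤ 1 and deg q ≤ 1. -/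
open Polynomial

lemma quad_ne_zero {k : Type*} [Field k] (a b c : k) (h3 : b ^ 2 ≠ 4 * a * c) :
    (C a * X ^ 2 + C b * X + C c : Polynomial k) ≠ 0 := by
  intro h
  have ha : a = 0 := by simpa using congrArg (fun r => Polynomial.coeff r 2) h
  have hb : b = 0 := by simpa using congrArg (fun r => Polynomial.coeff r 1) h
  have hc : c = 0 := by simpa using congrArg (fun r => Polynomial.coeff r 0) h
  apply h3; simp [ha, hb, hc]

lemma deg_le_of_sq_dvd_quad {k : Type*} [Field k] (a b c : k) (h3 : b ^ 2 ≠ 4 * a * c)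
    (p : Polynomial k) (hd : p ^ 2 ∣ (C a * X ^ 2 + C b * X + C c)) :
    p.degree ≤ 1 := by
  by_cases hp : p = 0
  · simp [hp]
  have hA := quad_ne_zero a b c h3
  have h1 : (p ^ 2).natDegree ≤ (C a * X ^ 2 + C b * X + C c : Polynomial k).natDegree :=
    Polynomial.natDegree_le_of_dvd hd hA
  have h2 : (C a * X ^ 2 + C b * X + C c : Polynomial k).natDegree ≤ 2 := by
    compute_degree
  rw [Polynomial.natDegree_pow] at h1
  have : p.natDegree ≤ 1 := by omega
  exact_mod_cast Polynomial.degree_le_of_natDegree_le this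

/-- Let `k` be a field of characteristic 0 and `t` transcendental over `k`,
with `a,b,c,d,e,f ∈ k` satisfying `a,d` not both zero, `a e = b d`, `a f ≠ c d`,
`b² ≠ 4 a c`, `e² ≠ 4 d f`.  If `p, q ∈ k[t]` are coprime, `q ≠ 0`, and
`p² (d t² + e t + f) = q² (a t² + b t + c)`, then `deg p ≤ 1` and `deg q ≤ 1`. -/
theorem stmt4 (k : Type*) [Field k] [CharZero k] (a b c d e f : k)
    (had : ¬(a = 0 ∧ d = 0)) (h1 : a * e = b * d) (h2 : a * f ≠ c * d)
    (h3 : b ^ 2 ≠ 4 * a * c) (h4 : e ^ 2 ≠ 4 * d * f)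
    (p q : Polynomial k) (hpq : IsCoprime p q) (hq : q ≠ 0)
    (heq : p ^ 2 * (C d * X ^ 2 + C e * X + C f) = q ^ 2 * (C a * X ^ 2 + C b * X + C c)) :
    p.degree ≤ 1 ∧ q.degree ≤ 1 := by
  have hcop : IsCoprime (p ^ 2) (q ^ 2) := hpq.pow
  have hdp : p ^ 2 ∣ (C a * X ^ 2 + C b * X + C c) := by
    have : p ^ 2 ∣ q ^ 2 * (C a * X ^ 2 + C b * X + C c) := ⟨_, heq.symm⟩
    exact hcop.dvd_of_dvd_mul_left this
  have hdq : q ^ 2 ∣ (C d * X ^ 2 + C e * X + C f) := by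
    have : q ^ 2 ∣ p ^ 2 * (C d * X ^ 2 + C e * X + C f) := ⟨_, heq⟩
    exact hcop.symm.dvd_of_dvd_mul_left this
  exact ⟨deg_le_of_sq_dvd_quad a b c h3 p hdp, deg_le_of_sq_dvd_quad d e f h4 q hdq⟩
end

section
/- Let k ⊆ K be fields and let V be a K⊗ₖK-module of rank n (i.e., both the left and right K-dimensions equal n), with simultaneous basis y₁,…,yₙ. Let A ∈ Mₙ(F) be the matrix of additive functions representing right multiplication in the left basis (yᵢα = Σⱼ aᵢⱼ(α)yⱼ) and B ∈ Mₙ(F) the matrix representing left multiplication in the right basis (δyᵢ = Σⱼ yⱼbⱼᵢ(δ)). Then Aᵀ and B are inverse to each other in the ring Mₙ(F), where F is the ring of additive functions K → K under composition and pointwise addition. -/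
/-!
Write `Φ c = ∑ᵢ (cᵢ ⊗ 1) yᵢ` and `Ψ c = ∑ᵢ (1 ⊗ cᵢ) yᵢ`. The definitions of `A` and `B` say
`Ψ = Φ ∘ Aᵀ` and `Φ = Ψ ∘ B` (matrices over `F` acting on `Kⁿ`), so `Φ = Φ ∘ AᵀB` and
`Ψ = Ψ ∘ BAᵀ`; uniqueness of left, resp. right, coordinates makes `Φ`, resp. `Ψ`, injective,
hence `AᵀB = 1` and `BAᵀ = 1`. The second identity is the first with the roles of the two
tensor factors exchanged.
-/

open Function Matrix TensorProduct

theorem Matrix.addMonoidEnd_mul_apply_apply {l m n M : Type*} [Fintype m] [AddCommMonoid M]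
    (X : Matrix l m (AddMonoid.End M)) (Y : Matrix m n (AddMonoid.End M)) (i : l) (j : n)
    (x : M) : (X * Y) i j x = ∑ k, X i k (Y k j x) := by
  rw [Matrix.mul_apply]
  exact AddMonoidHom.finsetSum_apply _ _ _

theorem Matrix.addMonoidEnd_one_apply_apply {ι M : Type*} [DecidableEq ι] [AddCommMonoid M]
    (i j : ι) (x : M) : (1 : Matrix ι ι (AddMonoid.End M)) i j x = (Pi.single j x : ι → M) i := by
  rcases eq_or_ne i j with rfl | h
  · simp
  · simp [Matrix.one_apply_ne h, h]

theorem Matrix.transpose_mul_eq_one_of_injective_sum {ι M V : Type*} [Fintype ι] [DecidableEq ι]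
    [AddCommMonoid M] [AddCommMonoid V] (ℓ r : ι → M →+ V) (A B : Matrix ι ι (AddMonoid.End M))
    (hA : ∀ i α, r i α = ∑ j, ℓ j (A i j α)) (hB : ∀ i δ, ℓ i δ = ∑ j, r j (B j i δ))
    (hℓ : Injective fun c : ι → M => ∑ i, ℓ i (c i)) :
    Aᵀ * B = 1 := by
  ext m i δ
  suffices (fun m => (Aᵀ * B) m i δ) = (Pi.single i δ : ι → M) by
    rw [congrFun this m, Matrix.addMonoidEnd_one_apply_apply]
  apply hℓ
  calc ∑ m, ℓ m ((Aᵀ * B) m i δ)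
      = ∑ l, ∑ m, ℓ m (A l m (B l i δ)) := by
        simp only [Matrix.addMonoidEnd_mul_apply_apply, Matrix.transpose_apply, map_sum]
        exact Finset.sum_comm
    _ = ℓ i δ := by simp only [← hA, ← hB]
    _ = ∑ m, ℓ m ((Pi.single i δ : ι → M) m) := by
        rw [Fintype.sum_eq_single i fun m hm => by simp [hm], Pi.single_eq_same]

/-- Let `k ⊆ K` be fields and `V` a `K ⊗ₖ K`-module of rank `n` (it has a
subset `{y₁,…,yₙ}` which is simultaneously a left and a right `K`-basis; here the left
action is `a • v = (a ⊗ 1) • v` and the right action is `v • b = (1 ⊗ b) • v`, and the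
basis property is expressed by unique representability).  Let `F = AddMonoid.End K` be the
ring of additive functions `K → K` (pointwise addition, composition), let
`A ∈ Mₙ(F)` represent right multiplication in the left basis (`yᵢ α = Σⱼ aᵢⱼ(α) yⱼ`), and
let `B ∈ Mₙ(F)` represent left multiplication in the right basis (`δ yᵢ = Σⱼ yⱼ bⱼᵢ(δ)`).
Then `Aᵀ` and `B` are mutually inverse in the matrix ring `Mₙ(F)`. -/
theorem stmt9 (k K : Type*) [Field k] [Field K] [Algebra k K]
    (V : Type*) [AddCommGroup V] [Module (K ⊗[k] K) V]
    (n : ℕ) (y : Fin n → V)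
    (hleft : ∀ v : V, ∃! c : Fin n → K, v = ∑ i, (c i ⊗ₜ[k] (1 : K)) • y i)
    (hright : ∀ v : V, ∃! c : Fin n → K, v = ∑ i, ((1 : K) ⊗ₜ[k] c i) • y i)
    (A B : Matrix (Fin n) (Fin n) (AddMonoid.End K))
    (hA : ∀ (i : Fin n) (α : K),
      ((1 : K) ⊗ₜ[k] α) • y i = ∑ j, ((A i j α) ⊗ₜ[k] (1 : K)) • y j)
    (hB : ∀ (i : Fin n) (δ : K),
      (δ ⊗ₜ[k] (1 : K)) • y i = ∑ j, ((1 : K) ⊗ₜ[k] (B j i δ)) • y j) :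
    A.transpose * B = 1 ∧ B * A.transpose = 1 := by
  let smulVia (f : K →ₐ[k] K ⊗[k] K) (i : Fin n) : K →+ V :=
    ((smulAddHom (K ⊗[k] K) V).flip (y i)).comp f.toAddMonoidHom
  let ℓ := smulVia Algebra.TensorProduct.includeLeft
  let r := smulVia Algebra.TensorProduct.includeRight
  have hℓ : Injective fun c : Fin n → K => ∑ i, ℓ i (c i) := fun _ _ h => (hleft _).unique rfl h
  have hr : Injective fun c : Fin n → K => ∑ i, r i (c i) := fun _ _ h => (hright _).unique rfl h
  refine ⟨A.transpose_mul_eq_one_of_injective_sum ℓ r B hA hB hℓ, ?_⟩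
  simpa using Bᵀ.transpose_mul_eq_one_of_injective_sum r ℓ Aᵀ hB hA hr
end

section
/- Let k ⊆ K be fields, K̄ an algebraic closure of K, λ : K → K̄ a k-linear field embedding, λ̄ an extension of λ to a k-embedding K̄ → K̄ which is an automorphism of K̄, and μ = λ̄⁻¹|_K. Then λ̄ restricts to an isomorphism of K⊗ₖK-modules from _μ(μ(K)∨K)_id to V(λ), where _μ(μ(K)∨K)_id has underlying set the composite field μ(K)∨K ⊆ K̄ with action (a⊗b)·c = μ(a) b c, and V(λ) has underlying set K∨λ(K) with action (a⊗b)·v = a v λ(b). -/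
/-- Let `k ⊆ K` be fields, `K̄` (here `Ω`) an algebraic closure of `K`,
`λ : K → K̄` a `k`-linear field embedding, `λ̄` an automorphism of `K̄` extending `λ`,
and `μ = λ̄⁻¹|_K`.  Then `λ̄` restricts to an isomorphism of `K ⊗ₖ K`-modules from
`_μ(μ(K) ∨ K)_id` (the composite field `μ(K) ∨ K ⊆ K̄` with action `(a ⊗ b) · c = μ(a) b c`)
to `V(λ)` (the composite field `K ∨ λ(K)` with action `(a ⊗ b) · v = a v λ(b)`): it maps
`μ(K) ∨ K` bijectively onto `K ∨ λ(K)` and intertwines the two-sided actions (it is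
automatically additive, being a ring isomorphism). -/
theorem stmt15 (k K Ω : Type*) [Field k] [Field K] [Field Ω] [Algebra k K] [Algebra K Ω]
    [Algebra k Ω] [IsScalarTower k K Ω] [IsAlgClosure K Ω]
    (lam : K →ₐ[k] Ω) (lambar : Ω ≃ₐ[k] Ω)
    (hext : ∀ x : K, lambar (algebraMap K Ω x) = lam x) :
    ∀ (mu : K → Ω), (∀ x : K, mu x = lambar.symm (algebraMap K Ω x)) →
    ∀ (W Kl : IntermediateField K Ω),
      W = IntermediateField.adjoin K (Set.range mu) →
      Kl = IntermediateField.adjoin K (Set.range lam) →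
      (∀ w ∈ W, lambar w ∈ Kl) ∧
      Set.BijOn lambar (W : Set Ω) (Kl : Set Ω) ∧
      (∀ (a b : K) (w : Ω), w ∈ W → lambar (mu a * algebraMap K Ω b * w) = algebraMap K Ω a * lambar w * lam b) := by
  intro mu hmu W Kl hW hKl
  have hmu' : ∀ x : K, lambar (mu x) = algebraMap K Ω x := by
    intro x; rw [hmu x]; exact lambar.apply_symm_apply _
  -- image of the generating set
  have himg : (lambar : Ω →+* Ω) '' (Set.range (algebraMap K Ω) ∪ Set.range mu)
      = Set.range (algebraMap K Ω) ∪ Set.range lam := by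
    ext y
    constructor
    · rintro ⟨_, ⟨x, rfl⟩ | ⟨x, rfl⟩, rfl⟩
      · exact Or.inr ⟨x, (hext x).symm⟩
      · exact Or.inl ⟨x, (hmu' x).symm⟩
    · rintro (⟨x, rfl⟩ | ⟨x, rfl⟩)
      · exact ⟨mu x, Or.inr ⟨x, rfl⟩, hmu' x⟩
      · exact ⟨algebraMap K Ω x, Or.inl ⟨x, rfl⟩, hext x⟩
  -- the subfield W maps onto Kl
  have hmap : Subfield.map (lambar : Ω →+* Ω) W.toSubfield = Kl.toSubfield := by
    rw [hW, hKl, IntermediateField.adjoin_toSubfield, IntermediateField.adjoin_toSubfield,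
      RingHom.map_field_closure, himg]
  have hset : (lambar : Ω →+* Ω) '' (W : Set Ω) = (Kl : Set Ω) := by
    have := congrArg (fun s : Subfield Ω => (s : Set Ω)) hmap
    simpa [Subfield.coe_map] using this
  have hmem : ∀ w ∈ W, lambar w ∈ Kl := by
    intro w hw
    have : lambar w ∈ (lambar : Ω →+* Ω) '' (W : Set Ω) := ⟨w, hw, rfl⟩
    rw [hset] at this
    exact this
  refine ⟨hmem, ⟨hmem, lambar.injective.injOn, ?_⟩, ?_⟩
  · intro y hy
    rw [← hset] at hy
    exact hy
  · intro a b w hw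
    rw [map_mul, map_mul, hmu', hext]
    ring
end

section
/- Let k ⊆ K be fields with K perfect, and let V be a K⊗ₖK-module with dim_K(ₖV) = n < ∞ and dim_K(V_K) = m < ∞. Then for the right dual V* (with action (a·ψ·b)(x) = aψ(bx) on Hom_K(V_K,K)) one has dim_K(ₖ(V*)) = m and dim_K((V*)_K) = n. -/
/-
The left dimension of `V*` is that of the ordinary dual of `V_K`. For the right dimension, let
a field `L` act `K`-linearly on a finite-dimensional `K`-space `V`, and let `L` act on
`V* = Hom_K(V, K)` by precomposition; then `dim_L V* = dim_L V`. Dualising over `K` is exact, so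
both sides are additive along `L`-stable subspaces, and induction on `dim_K V` reduces to the case
where `V` has no proper nonzero `L`-stable subspace. Then, by Schur's lemma, the `K`-algebra `F`
generated by `L` in `End_K V` is a commutative domain, finite over `K`, hence a field. Both `V`
and `V*` are `F`-spaces, `dim_K V* = dim_K V` gives `dim_F V* = dim_F V`, and
`dim_L = [F : L] · dim_F` on both. Ranks are compared as cardinals throughout, as these are
additive on short exact sequences whether finite or not.
-/

open TensorProduct

noncomputable section

variable (k K : Type*) [Field k] [Field K] [Algebra k K]
variable (V : Type*) [AddCommGroup V] [Module (K ⊗[k] K) V]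

/-- `V` regarded as a `K`-vector space via the *left* action `a • v = (a ⊗ 1) • v`. -/
@[nolint unusedArguments]
def Vleft (k K : Type*) [Field k] [Field K] [Algebra k K]
    (V : Type*) [AddCommGroup V] [Module (K ⊗[k] K) V] : Type _ := V

instance : AddCommGroup (Vleft k K V) := inferInstanceAs (AddCommGroup V)

noncomputable instance : Module K (Vleft k K V) :=
  Module.compHom V (Algebra.TensorProduct.includeLeftRingHom : K →+* K ⊗[k] K)

/-- `V` regarded as a `K`-vector space via the *right* action `b • v = (1 ⊗ b) • v`. -/
@[nolint unusedArguments]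
def Vright (k K : Type*) [Field k] [Field K] [Algebra k K]
    (V : Type*) [AddCommGroup V] [Module (K ⊗[k] K) V] : Type _ := V

instance : AddCommGroup (Vright k K V) := inferInstanceAs (AddCommGroup V)

noncomputable instance : Module K (Vright k K V) :=
  Module.compHom V (Algebra.TensorProduct.includeRight : K →ₐ[k] K ⊗[k] K).toRingHom

def Vright.toV : Vright k K V → V := fun v => v

def Vright.of : V → Vright k K V := fun v => v

/-- The left action `v ↦ (b ⊗ 1) • v` of `b ∈ K` on `V` is `K`-linear for the right
`K`-structure on `V` (the two actions commute). -/
noncomputable def lsV (b : K) : Vright k K V →ₗ[K] Vright k K V where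
  toFun v := Vright.of k K V ((b ⊗ₜ[k] (1 : K)) • Vright.toV k K V v)
  map_add' v w := smul_add (b ⊗ₜ[k] (1 : K)) (Vright.toV k K V v) (Vright.toV k K V w)
  map_smul' a v := by
    show (b ⊗ₜ[k] (1 : K)) • (((1 : K) ⊗ₜ[k] a) • Vright.toV k K V v) =
      ((1 : K) ⊗ₜ[k] a) • ((b ⊗ₜ[k] (1 : K)) • Vright.toV k K V v)
    rw [smul_smul, smul_smul, mul_comm]

/-- The right dual `V* = Hom_K(V_K, K)` of `V`, regarded as a `K`-vector space via its
*right* `K`-action `(ψ · b)(x) = ψ(b x)` (the left action `(a · ψ)(x) = a ψ(x)` is the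
canonical `K`-module structure on `Vright k K V →ₗ[K] K`). -/
@[nolint unusedArguments]
def DualRight (k K : Type*) [Field k] [Field K] [Algebra k K]
    (V : Type*) [AddCommGroup V] [Module (K ⊗[k] K) V] : Type _ := Vright k K V →ₗ[K] K

def DualRight.of : (Vright k K V →ₗ[K] K) → DualRight k K V := fun ψ => ψ

def DualRight.to : DualRight k K V → (Vright k K V →ₗ[K] K) := fun ψ => ψ

noncomputable instance : AddCommGroup (DualRight k K V) :=
  inferInstanceAs (AddCommGroup (Vright k K V →ₗ[K] K))

/-- The right `K`-action `(ψ · b)(x) = ψ(b x)` on the right dual `V*`. -/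
noncomputable instance : Module K (DualRight k K V) where
  smul b ψ := DualRight.of k K V ((DualRight.to k K V ψ).comp (lsV k K V b))
  one_smul ψ := by
    refine LinearMap.ext fun v => ?_
    show (DualRight.to k K V ψ)
      (Vright.of k K V (((1 : K) ⊗ₜ[k] (1 : K)) • Vright.toV k K V v)) =
        (DualRight.to k K V ψ) v
    have h : ((1 : K) ⊗ₜ[k] (1 : K)) • Vright.toV k K V v = Vright.toV k K V v := by
      rw [← Algebra.TensorProduct.one_def, one_smul]
    rw [h]
    rfl
  mul_smul b c ψ := by
    refine LinearMap.ext fun v => ?_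
    show (DualRight.to k K V ψ)
      (Vright.of k K V (((b * c) ⊗ₜ[k] (1 : K)) • Vright.toV k K V v)) =
        (DualRight.to k K V ψ) (Vright.of k K V ((c ⊗ₜ[k] (1 : K)) • Vright.toV k K V
          (Vright.of k K V ((b ⊗ₜ[k] (1 : K)) • Vright.toV k K V v))))
    have h : (c ⊗ₜ[k] (1 : K)) • ((b ⊗ₜ[k] (1 : K)) • Vright.toV k K V v) =
        ((b * c) ⊗ₜ[k] (1 : K)) • Vright.toV k K V v := by
      rw [smul_smul, Algebra.TensorProduct.tmul_mul_tmul, mul_one, mul_comm c b]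
    exact (congrArg (DualRight.to k K V ψ) (congrArg (Vright.of k K V) h)).symm
  smul_zero b := rfl
  smul_add b ψ χ := rfl
  add_smul b c ψ := by
    refine LinearMap.ext fun v => ?_
    show (DualRight.to k K V ψ)
      (Vright.of k K V (((b + c) ⊗ₜ[k] (1 : K)) • Vright.toV k K V v)) =
        (DualRight.to k K V ψ) (Vright.of k K V ((b ⊗ₜ[k] (1 : K)) • Vright.toV k K V v)) +
          (DualRight.to k K V ψ) (Vright.of k K V ((c ⊗ₜ[k] (1 : K)) • Vright.toV k K V v))
    have h : ((b + c) ⊗ₜ[k] (1 : K)) • Vright.toV k K V v =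
        (b ⊗ₜ[k] (1 : K)) • Vright.toV k K V v + (c ⊗ₜ[k] (1 : K)) • Vright.toV k K V v := by
      rw [TensorProduct.add_tmul, add_smul]
    rw [show Vright.of k K V (((b + c) ⊗ₜ[k] (1 : K)) • Vright.toV k K V v) =
      Vright.of k K V ((b ⊗ₜ[k] (1 : K)) • Vright.toV k K V v) +
      Vright.of k K V ((c ⊗ₜ[k] (1 : K)) • Vright.toV k K V v) from congrArg _ h]
    exact map_add _ _ _
  zero_smul ψ := by
    refine LinearMap.ext fun v => ?_
    show (DualRight.to k K V ψ)
      (Vright.of k K V (((0 : K) ⊗ₜ[k] (1 : K)) • Vright.toV k K V v)) = 0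
    have h : ((0 : K) ⊗ₜ[k] (1 : K)) • Vright.toV k K V v = 0 := by
      rw [TensorProduct.zero_tmul, zero_smul]
    rw [show Vright.of k K V (((0 : K) ⊗ₜ[k] (1 : K)) • Vright.toV k K V v) = 0 from
      congrArg _ h]
    exact map_zero _

universe uK uL uF v w

open Module

theorem rank_eq_add_of_exact {R : Type*} {M₁ M₂ M₃ : Type w} [DivisionRing R] [AddCommGroup M₁]
    [AddCommGroup M₂] [AddCommGroup M₃] [Module R M₁] [Module R M₂] [Module R M₃]
    {f : M₁ →ₗ[R] M₂} {g : M₂ →ₗ[R] M₃} (hf : Function.Injective f) (hg : Function.Surjective g)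
    (hfg : Function.Exact f g) : Module.rank R M₂ = Module.rank R M₁ + Module.rank R M₃ := by
  rw [← g.rank_range_add_rank_ker, LinearMap.range_eq_top.2 hg, rank_top,
    LinearMap.exact_iff.1 hfg, rank_range_of_injective f hf, add_comm]

/-- The dual `Hom_K(V, K)`, on which every commutative ring acting `K`-linearly on `V` acts by
precomposition; for `V = V_K` and the left action of `K` this is the right action on `V*`. -/
def PrecompDual (K : Type uK) (V : Type v) [Field K] [AddCommGroup V] [Module K V] :
    Type (max v uK) :=
  V →ₗ[K] K

namespace PrecompDual

variable (K : Type uK) (V : Type v) [Field K] [AddCommGroup V] [Module K V]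

instance : AddCommGroup (PrecompDual K V) := inferInstanceAs (AddCommGroup (V →ₗ[K] K))

instance : FunLike (PrecompDual K V) V K := inferInstanceAs (FunLike (V →ₗ[K] K) V K)

instance : LinearMapClass (PrecompDual K V) K V K :=
  inferInstanceAs (LinearMapClass (V →ₗ[K] K) K V K)

variable {K V}

@[ext] theorem ext {ψ χ : PrecompDual K V} (h : ∀ v, ψ v = χ v) : ψ = χ := LinearMap.ext h

variable {R : Type*} [CommRing R] [Module R V] [SMulCommClass R K V]

instance : Module R (PrecompDual K V) where
  smul r ψ := LinearMap.comp ψ (Module.toModuleEnd K V r)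
  one_smul ψ := LinearMap.ext fun v => congrArg ψ (one_smul R v)
  mul_smul r s ψ := LinearMap.ext fun v => congrArg ψ (by rw [mul_comm]; exact mul_smul s r v)
  smul_zero r := rfl
  smul_add r ψ χ := rfl
  add_smul r s ψ := LinearMap.ext fun v => (congrArg ψ (add_smul r s v)).trans (map_add ψ _ _)
  zero_smul ψ := LinearMap.ext fun v => (congrArg ψ (zero_smul R v)).trans (map_zero ψ)

theorem smul_apply (r : R) (ψ : PrecompDual K V) (v : V) : (r • ψ) v = ψ (r • v) := rfl

instance {S : Type*} [CommRing S] [Module S V] [SMulCommClass S K V] [SMul R S]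
    [IsScalarTower R S V] [SMulCommClass R S V] : IsScalarTower R S (PrecompDual K V) :=
  ⟨fun r s ψ => ext fun v => by rw [smul_apply, smul_apply, smul_apply, smul_assoc, smul_comm]⟩

variable (K V) in
def equivDual : PrecompDual K V ≃ₗ[K] Module.Dual K V where
  toFun ψ := ψ
  invFun ψ := ψ
  map_add' _ _ := rfl
  map_smul' a ψ := LinearMap.ext fun v => LinearMap.map_smul (M := V) ψ a v
  left_inv _ := rfl
  right_inv _ := rfl

instance [FiniteDimensional K V] : FiniteDimensional K (PrecompDual K V) :=
  (equivDual K V).symm.finiteDimensional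

variable {W : Type*} [AddCommGroup W] [Module K W] [Module R W] [SMulCommClass R K W]

def map (f : V →ₗ[K] W) (hf : ∀ (r : R) v, f (r • v) = r • f v) :
    PrecompDual K W →ₗ[R] PrecompDual K V where
  toFun ψ := f.dualMap ψ
  map_add' ψ χ := map_add f.dualMap ψ χ
  map_smul' r ψ := ext fun v => (congrArg ψ (hf r v)).symm

end PrecompDual

section

variable {L : Type uL} {K : Type uK} {V : Type v} [Field L] [Field K] [AddCommGroup V]
  [Module K V] [Module L V] [SMulCommClass L K V]

theorem finrank_precompDual_of_isScalarTower (F : Type uF) [Field F] [Algebra K F] [Module F V]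
    [IsScalarTower K F V] [FiniteDimensional K F] [FiniteDimensional K V] :
    finrank F (PrecompDual K V) = finrank F V := by
  have : FiniteDimensional F (PrecompDual K V) := Module.Finite.right K F _
  have : FiniteDimensional F V := Module.Finite.right K F V
  refine Nat.eq_of_mul_eq_mul_left (finrank_pos (R := K) (M := F)) ?_
  rw [finrank_mul_finrank, finrank_mul_finrank, (PrecompDual.equivDual K V).finrank_eq,
    Subspace.dual_finrank_eq]

theorem rank_precompDual_of_isScalarTower (F : Type uF) [Field F] [Algebra K F] [Algebra L F]
    [Module F V] [IsScalarTower K F V] [IsScalarTower L F V] [FiniteDimensional K F]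
    [FiniteDimensional K V] :
    Module.rank L (PrecompDual K V) = Cardinal.lift.{uK} (Module.rank L V) := by
  have : FiniteDimensional F (PrecompDual K V) := Module.Finite.right K F _
  have : FiniteDimensional F V := Module.Finite.right K F V
  have hD := lift_rank_mul_lift_rank L F (PrecompDual K V)
  have hV := lift_rank_mul_lift_rank L F V
  rw [← finrank_eq_rank (R := F), finrank_precompDual_of_isScalarTower F] at hD
  rw [← finrank_eq_rank (R := F)] at hV
  have hV' := congrArg Cardinal.lift.{uK} hV
  simp only [Cardinal.lift_mul, Cardinal.lift_lift, Cardinal.lift_natCast] at hD hV'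
  apply Cardinal.lift_injective.{uF}
  rw [← hD, Cardinal.lift_lift, hV']

open scoped IsMulCommutative in
theorem isField_adjoin_range_toModuleEnd [FiniteDimensional K V] [Nontrivial V]
    (hsimple : ∀ N : Submodule K V, (∀ (l : L), ∀ v ∈ N, l • v ∈ N) → N = ⊥ ∨ N = ⊤) :
    IsField (Algebra.adjoin K (Set.range (Module.toModuleEnd K (S := L) V))) := by
  let ρ := Module.toModuleEnd K (S := L) V
  let F := Algebra.adjoin K (Set.range ρ)
  have : IsMulCommutative F := Algebra.isMulCommutative_adjoin K <| by
    rintro _ ⟨l, rfl⟩ _ ⟨m, rfl⟩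
    rw [← map_mul, ← map_mul, mul_comm]
  -- Schur: elements of `F` commute with `L`, so their kernels are `L`-stable.
  have hinj (T : F) (hT : T ≠ 0) : Function.Injective (T : Module.End K V) := by
    rw [← LinearMap.ker_eq_bot]
    refine (hsimple _ fun l v hv => ?_).resolve_right
      fun h => hT (Subtype.ext (LinearMap.ker_eq_top.1 h))
    have hcomm := congrArg (fun S : F => (S : Module.End K V) v)
      (mul_comm T ⟨ρ l, Algebra.subset_adjoin ⟨l, rfl⟩⟩)
    simp only [Subalgebra.coe_mul, Module.End.mul_apply] at hcomm
    rw [LinearMap.mem_ker] at hv ⊢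
    rw [show l • v = ρ l v from rfl, hcomm, hv, map_zero]
  have : NoZeroDivisors F := ⟨fun {S T} hST => or_iff_not_imp_left.2 fun hS => Subtype.ext <|
    LinearMap.ext fun v => hinj S hS <| by
      simpa using congrArg (fun U : F => (U : Module.End K V) v) hST⟩
  have : IsDomain F := NoZeroDivisors.to_isDomain F
  have : IsArtinianRing F := IsArtinianRing.of_finite K F
  exact IsArtinianRing.isField_of_isDomain F

theorem rank_precompDual_of_simple [FiniteDimensional K V] [Nontrivial V]
    (hsimple : ∀ N : Submodule K V, (∀ (l : L), ∀ v ∈ N, l • v ∈ N) → N = ⊥ ∨ N = ⊤) :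
    Module.rank L (PrecompDual K V) = Cardinal.lift.{uK} (Module.rank L V) := by
  let ρ := Module.toModuleEnd K (S := L) V
  let F := Algebra.adjoin K (Set.range ρ)
  let _ : Field F := (isField_adjoin_range_toModuleEnd hsimple).toField
  let _ : Algebra L F := (ρ.codRestrict F fun l => Algebra.subset_adjoin ⟨l, rfl⟩).toAlgebra
  have : IsScalarTower L F V := ⟨fun _ _ _ => rfl⟩
  exact rank_precompDual_of_isScalarTower F

variable (L) in
def Submodule.ofStable (N : Submodule K V) (hN : ∀ (l : L), ∀ v ∈ N, l • v ∈ N) :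
    Submodule L V where
  toAddSubmonoid := N.toAddSubmonoid
  smul_mem' := hN

theorem rank_precompDual_of_stable [FiniteDimensional K V] (N : Submodule K V)
    (hN : ∀ (l : L), ∀ v ∈ N, l • v ∈ N) (hbot : N ≠ ⊥) (htop : N ≠ ⊤)
    (ih : ∀ (W : Type v) [AddCommGroup W] [Module K W] [Module L W] [SMulCommClass L K W]
      [FiniteDimensional K W], finrank K W < finrank K V →
        Module.rank L (PrecompDual K W) = Cardinal.lift.{uK} (Module.rank L W)) :
    Module.rank L (PrecompDual K V) = Cardinal.lift.{uK} (Module.rank L V) := by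
  let NL := N.ofStable L hN
  let _ : Module L N := NL.module
  let _ : Module L (V ⧸ N) := Submodule.Quotient.module NL
  have : SMulCommClass L K N := ⟨fun l a x => Subtype.ext (smul_comm l a (x : V))⟩
  have : SMulCommClass L K (V ⧸ N) := ⟨fun l a q =>
    Quotient.inductionOn' q fun v => congrArg Submodule.Quotient.mk (smul_comm l a v)⟩
  have hrankV : Module.rank L V = Module.rank L N + Module.rank L (V ⧸ N) :=
    (rank_quotient_add_rank_of_divisionRing NL).symm.trans (add_comm _ _)
  have hrankD : Module.rank L (PrecompDual K V) =
      Module.rank L (PrecompDual K (V ⧸ N)) + Module.rank L (PrecompDual K N) :=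
    rank_eq_add_of_exact (f := PrecompDual.map (R := L) N.mkQ fun _ _ => rfl)
      (g := PrecompDual.map (R := L) N.subtype fun _ _ => rfl)
      (LinearMap.dualMap_injective_of_surjective N.mkQ_surjective)
      (LinearMap.dualMap_surjective_of_injective N.injective_subtype)
      fun ψ => (SetLike.ext_iff.1 N.range_dualMap_mkQ_eq ψ).symm
  have hQ : finrank K (V ⧸ N) < finrank K V := by
    have := N.finrank_quotient_add_finrank
    have := Submodule.finrank_eq_zero.not.2 hbot
    omega
  rw [hrankD, ih N (Submodule.finrank_lt htop), ih (V ⧸ N) hQ, hrankV, Cardinal.lift_add,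
    add_comm]

theorem rank_precompDual [FiniteDimensional K V] :
    Module.rank L (PrecompDual K V) = Cardinal.lift.{uK} (Module.rank L V) := by
  induction hn : finrank K V using Nat.strong_induction_on generalizing V with
  | _ n ih =>
  rcases subsingleton_or_nontrivial V with hV | hV
  · have : Subsingleton (PrecompDual K V) :=
      ⟨fun ψ χ => PrecompDual.ext fun v => by rw [Subsingleton.elim v 0, map_zero, map_zero]⟩
    simp
  by_cases hstable : ∃ N : Submodule K V, (∀ (l : L), ∀ v ∈ N, l • v ∈ N) ∧ N ≠ ⊥ ∧ N ≠ ⊤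
  · obtain ⟨N, hN, hbot, htop⟩ := hstable
    exact rank_precompDual_of_stable N hN hbot htop
      fun W _ _ _ _ _ hW => ih _ (hn ▸ hW) (V := W) rfl
  · push Not at hstable
    exact rank_precompDual_of_simple fun N hN => or_iff_not_imp_left.2 (hstable N hN)

theorem finrank_precompDual [FiniteDimensional K V] :
    finrank L (PrecompDual K V) = finrank L V := by
  rw [finrank, rank_precompDual, Cardinal.toNat_lift, finrank]

end

/-- A copy of `K`, so that the left action of `K` on `Vright k K V` can be a second scalar
action next to the right one. -/
def LeftScalar (K : Type*) : Type _ := K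

instance : Field (LeftScalar K) := inferInstanceAs (Field K)

instance : Module (LeftScalar K) (Vright k K V) :=
  Module.compHom V (Algebra.TensorProduct.includeLeftRingHom : K →+* K ⊗[k] K)

instance : SMulCommClass (LeftScalar K) K (Vright k K V) :=
  ⟨fun a b v => show ((show K from a) ⊗ₜ[k] (1 : K)) • ((1 : K) ⊗ₜ[k] b) • (show V from v) =
    ((1 : K) ⊗ₜ[k] b) • ((show K from a) ⊗ₜ[k] (1 : K)) • (show V from v) by
      rw [smul_smul, smul_smul, mul_comm]⟩

theorem stmt18 (n m : ℕ)
    (hl : Module.finrank K (Vleft k K V) = n)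
    (hfr : FiniteDimensional K (Vright k K V)) (hr : Module.finrank K (Vright k K V) = m) :
    Module.finrank K (Vright k K V →ₗ[K] K) = m ∧
      Module.finrank K (DualRight k K V) = n := by
  refine ⟨hr ▸ Subspace.dual_finrank_eq, ?_⟩
  rw [← hl]
  -- `DualRight k K V` and `Vleft k K V` are, definitionally, `PrecompDual K (Vright k K V)` and
  -- `Vright k K V` with their `LeftScalar K`-actions.
  exact finrank_precompDual (L := LeftScalar K) (K := K) (V := Vright k K V)

end
end
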